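/- Let T, c ∈ (0,∞), d ∈ ℕ, σ ∈ ℝ^{d×d}, and let b : [0,T]×ℝ^d → ℝ^d be a Borel measurable function satisfying ‖b(t,x)‖_{ℝ^d} ≤ c(1 + ‖x‖_{ℝ^d}) for all t ∈ [0,T], x ∈ ℝ^d. Let U : [0,T] × Ω → ℝ^d be a standard Brownian motion with continuous sample paths on a probability space (Ω, 𝓕, ℙ), and let R^{t,x} : [0,t] × Ω → ℝ^d, for t ∈ [0,T] and x ∈ ℝ^d, be stochastic processes satisfying R^{t,x}_s = x + ∫_0^s b(t−r, R^{t,x}_r) dr + σ U_s for all t ∈ [0,T], s ∈ [0,t], x ∈ ℝ^d. Then for all p ∈ (0,∞): E[exp(p · sup_{t∈[0,T]} sup_{s∈[0,t]} sup_{x∈[−p,p]^d} ‖R^{t,x}_s‖_{ℝ^d})] < ∞. -/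

import Mathlib

open MeasureTheory ProbabilityTheory Set Filter Real
open scoped NNReal ENNReal

noncomputable section

lemma gauss_tail_Ici {v : ℝ≥0} (hv : v ≠ 0) {x : ℝ} (hx : 0 ≤ x) :
    gaussianReal 0 v (Set.Ici x) ≤ ENNReal.ofReal (Real.exp (-x^2 / (2*v))) := by
  have hv' : (0:ℝ) < v := by positivity
  rw [gaussianReal_apply 0 hv]
  have key : ∀ y ∈ Set.Ici x, gaussianPDF 0 v y ≤
      ENNReal.ofReal (Real.exp (-x^2/(2*v))) * gaussianPDF 0 v (y - x) := by
    intro y hy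
    simp only [gaussianPDF]
    rw [← ENNReal.ofReal_mul (by positivity)]
    apply ENNReal.ofReal_le_ofReal
    simp only [gaussianPDFReal]
    have hC : (0:ℝ) ≤ (√(2 * π * (v:ℝ)))⁻¹ := by positivity
    have hyx : x ≤ y := hy
    have h2v : (0:ℝ) < 2*(v:ℝ) := by positivity
    have hexp : Real.exp (-(y - 0)^2/(2*(v:ℝ))) ≤
        Real.exp (-(y - x - 0)^2/(2*(v:ℝ))) * Real.exp (-x^2/(2*(v:ℝ))) := by
      rw [← Real.exp_add, ← add_div]
      apply Real.exp_le_exp.2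
      gcongr
      nlinarith
    calc (√(2 * π * (v:ℝ)))⁻¹ * Real.exp (-(y - 0)^2/(2*(v:ℝ)))
        ≤ (√(2 * π * (v:ℝ)))⁻¹ * (Real.exp (-(y - x - 0)^2/(2*(v:ℝ))) * Real.exp (-x^2/(2*(v:ℝ)))) :=
          mul_le_mul_of_nonneg_left hexp hC
      _ = Real.exp (-x^2/(2*(v:ℝ))) * ((√(2 * π * (v:ℝ)))⁻¹ * Real.exp (-(y - x - 0)^2/(2*(v:ℝ)))) := by
          ring
  calc ∫⁻ y in Set.Ici x, gaussianPDF 0 v y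
      ≤ ∫⁻ y in Set.Ici x, ENNReal.ofReal (Real.exp (-x^2/(2*v))) * gaussianPDF 0 v (y - x) :=
        setLIntegral_mono (((measurable_gaussianPDF 0 v).comp (measurable_id.sub measurable_const)).const_mul _) key
    _ ≤ ∫⁻ y, ENNReal.ofReal (Real.exp (-x^2/(2*v))) * gaussianPDF 0 v (y - x) :=
        setLIntegral_le_lintegral _ _
    _ = ENNReal.ofReal (Real.exp (-x^2/(2*v))) * ∫⁻ y, gaussianPDF 0 v (y - x) :=
        lintegral_const_mul' _ _ ENNReal.ofReal_ne_top
    _ = ENNReal.ofReal (Real.exp (-x^2/(2*v))) := by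
        rw [lintegral_sub_right_eq_self (gaussianPDF 0 v) x, lintegral_gaussianPDF_eq_one 0 hv,
          mul_one]

lemma gauss_tail_abs {Ω : Type} [MeasurableSpace Ω] {P : Measure Ω} {Y : Ω → ℝ}
    (hY : Measurable Y) {v : ℝ≥0} (hv : v ≠ 0)
    (hlaw : Measure.map Y P = gaussianReal 0 v) {x : ℝ} (hx : 0 ≤ x) :
    P {ω | x ≤ |Y ω|} ≤ ENNReal.ofReal (2 * Real.exp (-x^2 / (2*v))) := by
  have h1 : P {ω | x ≤ Y ω} ≤ ENNReal.ofReal (Real.exp (-x^2 / (2*v))) := by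
    have : P {ω | x ≤ Y ω} = Measure.map Y P (Set.Ici x) := by
      rw [Measure.map_apply hY measurableSet_Ici]; rfl
    rw [this, hlaw]; exact gauss_tail_Ici hv hx
  have hneglaw : Measure.map (fun ω => -Y ω) P = gaussianReal 0 v := by
    have heq : (fun ω => -Y ω) = ((-1 : ℝ) * ·) ∘ Y := by ext ω; simp
    have hm : Measurable ((-1 : ℝ) * ·) := measurable_const_mul _
    rw [heq, ← Measure.map_map hm hY, hlaw, gaussianReal_map_const_mul]
    have : (⟨(-1:ℝ)^2, sq_nonneg _⟩ : ℝ≥0) = 1 := by ext; norm_num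
    rw [mul_zero]; congr 1; ext; simp
  have h2 : P {ω | x ≤ -Y ω} ≤ ENNReal.ofReal (Real.exp (-x^2 / (2*v))) := by
    have : P {ω | x ≤ -Y ω} = Measure.map (fun ω => -Y ω) P (Set.Ici x) := by
      rw [Measure.map_apply (f := fun ω => -Y ω) hY.neg measurableSet_Ici]; rfl
    rw [this, hneglaw]; exact gauss_tail_Ici hv hx
  have hsub : {ω | x ≤ |Y ω|} ⊆ {ω | x ≤ Y ω} ∪ {ω | x ≤ -Y ω} := by
    intro ω hω
    have hω' : x ≤ |Y ω| := hω
    rcases le_abs.mp hω' with h | h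
    · exact Or.inl h
    · exact Or.inr h
  calc P {ω | x ≤ |Y ω|} ≤ P ({ω | x ≤ Y ω} ∪ {ω | x ≤ -Y ω}) := measure_mono hsub
    _ ≤ P {ω | x ≤ Y ω} + P {ω | x ≤ -Y ω} := measure_union_le _ _
    _ ≤ ENNReal.ofReal (Real.exp (-x^2 / (2*v))) + ENNReal.ofReal (Real.exp (-x^2 / (2*v))) :=
        add_le_add h1 h2
    _ = ENNReal.ofReal (2 * Real.exp (-x^2 / (2*v))) := by
        rw [← ENNReal.ofReal_add (by positivity) (by positivity)]
        congr 1; ring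

lemma exists_dense_seq_Icc {T : ℝ} (hT : 0 < T) :
    ∃ u : ℕ → ℝ, (∀ n, u n ∈ Set.Icc 0 T) ∧
      ∀ s ∈ Set.Icc (0:ℝ) T, ∀ ε > 0, ∃ n, |u n - s| < ε := by
  have hne : Nonempty (Set.Icc (0:ℝ) T) := ⟨⟨0, le_refl 0, hT.le⟩⟩
  obtain ⟨u, hu⟩ := TopologicalSpace.exists_dense_seq (Set.Icc (0:ℝ) T)
  refine ⟨fun n => (u n : ℝ), fun n => (u n).2, ?_⟩
  intro s hs ε hε
  obtain ⟨n, hn⟩ := Metric.denseRange_iff.mp hu ⟨s, hs⟩ ε hε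
  refine ⟨n, ?_⟩
  rw [abs_sub_comm]
  simpa [Subtype.dist_eq, Real.dist_eq] using hn

lemma bddAbove_range_of_cont {T : ℝ} {g : ℝ → ℝ} (hg : Continuous g) {u : ℕ → ℝ}
    (hmem : ∀ n, u n ∈ Set.Icc 0 T) :
    BddAbove (Set.range fun n => g (u n)) := by
  have h := (isCompact_Icc (a := (0:ℝ)) (b := T)).bddAbove_image hg.continuousOn
  refine BddAbove.mono ?_ h
  rintro _ ⟨n, rfl⟩
  exact ⟨u n, hmem n, rfl⟩

lemma le_iSup_of_dense_cont {T : ℝ} {g : ℝ → ℝ} (hg : Continuous g) {u : ℕ → ℝ}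
    (hmem : ∀ n, u n ∈ Set.Icc 0 T)
    (hdense : ∀ s ∈ Set.Icc (0:ℝ) T, ∀ ε > 0, ∃ n, |u n - s| < ε) :
    ∀ s ∈ Set.Icc (0:ℝ) T, g s ≤ ⨆ n, g (u n) := by
  have hbdd : BddAbove (Set.range fun n => g (u n)) := bddAbove_range_of_cont hg hmem
  intro s hs
  apply le_of_forall_pos_le_add
  intro ε hε
  obtain ⟨δ, hδ, hcont⟩ := Metric.continuous_iff.mp hg s ε hε
  obtain ⟨n, hn⟩ := hdense s hs δ hδ
  have h2 := hcont (u n) (by rwa [Real.dist_eq])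
  rw [Real.dist_eq] at h2
  have h1 : g s ≤ g (u n) + ε := by
    have := abs_lt.mp h2
    linarith [this.1, this.2]
  exact h1.trans (add_le_add_left (le_ciSup hbdd n) ε)


lemma dyadic_chain {T : ℝ} (hT : 0 < T) {g : ℝ → ℝ} (hg : Continuous g) (hg0 : g 0 = 0)
    {θ : ℕ → ℝ} (hθ : ∀ n, 0 ≤ θ n) (hsum : Summable θ)
    (hinc : ∀ n : ℕ, ∀ k : ℕ, k < 2^n →
      |g (((k:ℝ)+1) * T / 2^n) - g ((k:ℝ) * T / 2^n)| < θ n) :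
    ∀ s ∈ Set.Icc (0:ℝ) T, |g s| ≤ ∑' n, θ n := by
  -- dyadic induction
  have claim : ∀ N : ℕ, ∀ k : ℕ, k ≤ 2^N →
      |g ((k:ℝ) * T / 2^N)| ≤ ∑ n ∈ Finset.range (N+1), θ n := by
    intro N
    induction N with
    | zero =>
      intro k hk
      interval_cases k
      · simpa [hg0] using hθ 0
      · have h := (hinc 0 0 (by norm_num)).le
        rw [Finset.sum_range_one]
        push_cast at h ⊢
        norm_num [hg0] at h ⊢
        exact h
    | succ N ih =>
      intro k hk
      rcases Nat.even_or_odd k with ⟨m, hm⟩ | ⟨m, hm⟩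
      · -- k = m + m
        have hm2 : k = 2 * m := by omega
        have hmle : m ≤ 2^N := by
          subst hm2; rw [pow_succ] at hk; omega
        have hpoint : (k:ℝ) * T / 2^(N+1) = (m:ℝ) * T / 2^N := by
          subst hm2; push_cast
          rw [pow_succ]
          field_simp
        rw [hpoint]
        refine (ih m hmle).trans ?_
        apply Finset.sum_le_sum_of_subset_of_nonneg
        · exact Finset.range_subset_range.2 (by omega)
        · intro n _ _; exact hθ n
      · -- k = 2m+1
        have hm2 : k = 2 * m + 1 := hm
        have hmlt : m < 2^N := by
          subst hm2; rw [pow_succ] at hk; omega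
        have h2m : 2 * m < 2^(N+1) := by
          rw [pow_succ]; omega
        have hpoint : ((2*m : ℕ):ℝ) * T / 2^(N+1) = (m:ℝ) * T / 2^N := by
          push_cast
          rw [pow_succ]
          field_simp
        have hincr := hinc (N+1) (2*m) h2m
        have htri : |g ((k:ℝ) * T / 2^(N+1))| ≤
            |g (((2*m : ℕ):ℝ) * T / 2^(N+1))| +
            |g ((k:ℝ) * T / 2^(N+1)) - g (((2*m : ℕ):ℝ) * T / 2^(N+1))| := by
          have := abs_sub_abs_le_abs_sub (g ((k:ℝ) * T / 2^(N+1)))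
            (g (((2*m : ℕ):ℝ) * T / 2^(N+1)))
          linarith [this]
        have hkast : (k:ℝ) = ((2*m : ℕ):ℝ) + 1 := by subst hm2; push_cast; ring
        have hterm : |g ((k:ℝ) * T / 2^(N+1)) - g (((2*m : ℕ):ℝ) * T / 2^(N+1))| ≤ θ (N+1) := by
          rw [hkast]
          exact hincr.le
        rw [Finset.sum_range_succ]
        have hbase : |g (((2*m : ℕ):ℝ) * T / 2^(N+1))| ≤ ∑ n ∈ Finset.range (N+1), θ n := by
          rw [hpoint]; exact ih m hmlt.le
        linarith
  -- from dyadics to all points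
  intro s hs
  apply le_of_forall_pos_le_add
  intro ε hε
  obtain ⟨δ, hδ, hcont⟩ := Metric.continuous_iff.mp hg s ε hε
  -- choose N with T / 2^N < δ
  obtain ⟨N, hN⟩ := exists_pow_lt_of_lt_one (div_pos hδ hT) (by norm_num : (1:ℝ)/2 < 1)
  have hTN : T / 2^N < δ := by
    have h2N : (0:ℝ) < 2^N := by positivity
    have : ((1:ℝ)/2)^N = 1/2^N := by rw [div_pow, one_pow]
    rw [this] at hN
    calc T / 2^N = T * (1/2^N) := by ring
      _ < T * (δ/T) := mul_lt_mul_of_pos_left hN hT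
      _ = δ := by field_simp
  set k := ⌊s * 2^N / T⌋₊ with hkdef
  have h2N : (0:ℝ) < 2^N := by positivity
  have hs0 : 0 ≤ s := hs.1
  have hsT : s ≤ T := hs.2
  have hfl1 : (k:ℝ) ≤ s * 2^N / T := Nat.floor_le (by positivity)
  have hfl2 : s * 2^N / T < (k:ℝ) + 1 := Nat.lt_floor_add_one _
  have hkle : k ≤ 2^N := by
    have : s * 2^N / T ≤ 2^N := by
      rw [div_le_iff₀ hT]
      calc s * 2^N ≤ T * 2^N := by nlinarith
        _ = 2^N * T := by ring
    calc k ≤ ⌊((2^N : ℕ):ℝ)⌋₊ := by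
          apply Nat.floor_le_floor
          push_cast
          exact this
      _ = 2^N := Nat.floor_natCast _
  have hlow : (k:ℝ) * T / 2^N ≤ s := by
    rw [div_le_iff₀ h2N]
    have := mul_le_mul_of_nonneg_right hfl1 hT.le
    rw [div_mul_cancel₀ _ hT.ne'] at this
    linarith
  have hhigh : s - (k:ℝ) * T / 2^N < T / 2^N := by
    rw [sub_lt_iff_lt_add, ← add_div, lt_div_iff₀ h2N]
    have := mul_lt_mul_of_pos_right hfl2 hT
    rw [div_mul_cancel₀ _ hT.ne'] at this
    linarith
  have hdist : |(k:ℝ) * T / 2^N - s| < δ := by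
    rw [abs_sub_comm, abs_of_nonneg (by linarith)]
    linarith
  have hnear := hcont ((k:ℝ) * T / 2^N) (by rwa [Real.dist_eq])
  rw [Real.dist_eq] at hnear
  have hdy := claim N k hkle
  have hsum_le : ∑ n ∈ Finset.range (N+1), θ n ≤ ∑' n, θ n :=
    hsum.sum_le_tsum _ (fun n _ => hθ n)
  have habs : |g s| ≤ |g ((k:ℝ) * T / 2^N)| + ε := by
    have h := abs_sub_abs_le_abs_sub (g s) (g ((k:ℝ) * T / 2^N))
    have hcomm : |g s - g ((k:ℝ) * T / 2^N)| = |g ((k:ℝ) * T / 2^N) - g s| := abs_sub_comm _ _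
    linarith
  linarith
lemma sqrt_half_pow (n : ℕ) : Real.sqrt ((1/2)^n) = (Real.sqrt (1/2))^n := by
  induction n with
  | zero => simp
  | succ n ih => rw [pow_succ, pow_succ, Real.sqrt_mul (by positivity), ih]

lemma theta_summable {T : ℝ} (hT : 0 < T) :
    Summable (fun n : ℕ => Real.sqrt (2*T*(n+1)/2^n)) := by
  have hr0 : (0:ℝ) ≤ Real.sqrt (1/2) := Real.sqrt_nonneg _
  have hr1 : Real.sqrt (1/2) < 1 := by
    rw [show (1:ℝ) = Real.sqrt 1 by simp]
    exact Real.sqrt_lt_sqrt (by norm_num) (by norm_num)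
  have hmaj : Summable (fun n : ℕ => Real.sqrt (2*T) * (((n:ℝ)+1) * (Real.sqrt (1/2))^n)) := by
    apply Summable.mul_left
    have h1 : Summable (fun n : ℕ => (n:ℝ) * (Real.sqrt (1/2))^n) := by
      have := summable_pow_mul_geometric_of_norm_lt_one 1
        (show ‖Real.sqrt (1/2)‖ < 1 by rwa [Real.norm_eq_abs, abs_of_nonneg hr0])
      simpa using this
    have h2 : Summable (fun n : ℕ => (Real.sqrt (1/2))^n) :=
      summable_geometric_of_lt_one hr0 hr1
    apply (h1.add h2).congr
    intro n
    ring
  apply Summable.of_nonneg_of_le (fun n => Real.sqrt_nonneg _) _ hmaj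
  intro n
  have heq : 2*T*((n:ℝ)+1)/2^n = (2*T) * (((n:ℝ)+1) * (1/2)^n) := by
    rw [div_pow, one_pow]
    field_simp
  rw [heq, Real.sqrt_mul (show (0:ℝ) ≤ 2*T by positivity) (((n:ℝ)+1) * (1/2)^n)]
  apply mul_le_mul_of_nonneg_left _ (Real.sqrt_nonneg _)
  rw [Real.sqrt_mul (by positivity : (0:ℝ) ≤ (n:ℝ)+1), sqrt_half_pow]
  apply mul_le_mul_of_nonneg_right _ (by positivity)
  have h := Real.sqrt_le_sqrt (show ((n:ℝ)+1) ≤ ((n:ℝ)+1)^2 by nlinarith [Nat.cast_nonneg (α := ℝ) n])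
  rwa [Real.sqrt_sq (by positivity)] at h

set_option maxHeartbeats 1000000 in
lemma coord_exp_integrable {Ω : Type} [MeasurableSpace Ω] (P : Measure Ω) [IsProbabilityMeasure P]
    {T : ℝ} (hT : 0 < T) (X : ℝ → Ω → ℝ)
    (hXmeas : ∀ t, Measurable (X t))
    (hXcont : ∀ ω, Continuous fun t => X t ω)
    (hXinit : ∀ᵐ ω ∂P, X 0 ω = 0)
    (hXgauss : ∀ s t : ℝ, 0 ≤ s → s ≤ t →
      Measure.map (fun ω => X t ω - X s ω) P = gaussianReal 0 (Real.toNNReal (t - s)))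
    {u : ℕ → ℝ} (hmem : ∀ n, u n ∈ Set.Icc 0 T)
    {μ : ℝ} (hμ : 0 < μ) :
    ∫⁻ ω, ENNReal.ofReal (Real.exp (μ * ⨆ n, |X (u n) ω|)) ∂P < ⊤ := by
  have hTne : T ≠ 0 := hT.ne'
  set θ : ℕ → ℝ := fun n => Real.sqrt (2*T*((n:ℝ)+1)/2^n) with hθdef
  have hθpos : ∀ n, 0 < θ n := fun n => Real.sqrt_pos.2 (by positivity)
  have hθsum : Summable θ := theta_summable hT
  set Θ : ℝ := ∑' n, θ n with hΘdef
  have hΘpos : 0 < Θ :=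
    lt_of_lt_of_le (hθpos 0) (hθsum.le_tsum 0 (fun j _ => (hθpos j).le))
  set M : Ω → ℝ := fun ω => ⨆ n, |X (u n) ω| with hMdef
  have hMbdd : ∀ ω, BddAbove (Set.range fun n => |X (u n) ω|) :=
    fun ω => bddAbove_range_of_cont (hXcont ω).abs hmem
  have hM0 : ∀ ω, 0 ≤ M ω :=
    fun ω => le_trans (abs_nonneg _) (le_ciSup (hMbdd ω) 0)
  have hgeomlt : (2:ℝ)/Real.exp 1 < 1 := by
    rw [div_lt_one (Real.exp_pos 1)]
    nlinarith [Real.exp_one_gt_d9]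
  have hgeom0 : (0:ℝ) ≤ 2/Real.exp 1 := by positivity
  set C : ℝ := 2 * (1 - 2/Real.exp 1)⁻¹ with hCdef
  have hCpos : 0 < C := by
    have : 0 < 1 - 2/Real.exp 1 := by linarith
    positivity
  -- tail bound
  have tail : ∀ a : ℝ, 1 ≤ a →
      P {ω | a * Θ < M ω} ≤ ENNReal.ofReal (C * Real.exp (-a^2)) := by
    intro a ha
    have ha0 : 0 < a := lt_of_lt_of_le one_pos ha
    set B : ℕ → ℕ → Set Ω := fun n k =>
      {ω | a * θ n ≤ |X (((k:ℝ)+1)*T/2^n) ω - X ((k:ℝ)*T/2^n) ω|} with hBdef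
    have hB : ∀ n : ℕ, ∀ k : ℕ, k < 2^n →
        P (B n k) ≤ ENNReal.ofReal (2 * Real.exp (-(a^2 * ((n:ℝ)+1)))) := by
      intro n k hk
      have h2n : (0:ℝ) < 2^n := by positivity
      have ht1 : (0:ℝ) ≤ (k:ℝ)*T/2^n := by positivity
      have ht2 : (k:ℝ)*T/2^n ≤ ((k:ℝ)+1)*T/2^n := by
        have hkk : (k:ℝ)*T ≤ ((k:ℝ)+1)*T := by nlinarith [Nat.cast_nonneg (α := ℝ) k]
        exact div_le_div_of_nonneg_right hkk h2n.le
      have hdiff : ((k:ℝ)+1)*T/2^n - (k:ℝ)*T/2^n = T/2^n := by ring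
      have hv : Real.toNNReal (((k:ℝ)+1)*T/2^n - (k:ℝ)*T/2^n) ≠ 0 := by
        rw [hdiff]
        simp only [ne_eq, Real.toNNReal_eq_zero, not_le]
        positivity
      have hlaw := hXgauss ((k:ℝ)*T/2^n) (((k:ℝ)+1)*T/2^n) ht1 ht2
      have htail := gauss_tail_abs ((hXmeas _).sub (hXmeas _)) hv hlaw
        (x := a * θ n) (by positivity)
      have hveq : ((Real.toNNReal (((k:ℝ)+1)*T/2^n - (k:ℝ)*T/2^n)):ℝ) = T/2^n := by
        rw [hdiff, Real.coe_toNNReal _ (by positivity)]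
      have hexp_eq : -(a * θ n)^2 / (2 * (T/2^n)) = -(a^2 * ((n:ℝ)+1)) := by
        have hsq : θ n ^ 2 = 2*T*((n:ℝ)+1)/2^n := Real.sq_sqrt (by positivity)
        rw [mul_pow, hsq]
        field_simp
      refine le_trans htail (le_of_eq ?_)
      rw [hveq, hexp_eq]
    have hincl : {ω | a * Θ < M ω} ⊆
        {ω | ¬ (X 0 ω = 0)} ∪ ⋃ (n : ℕ), ⋃ (k : Fin (2^n)), B n (k:ℕ) := by
      intro ω hω
      by_cases h0 : X 0 ω = 0
      · right
        by_contra hnot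
        simp only [Set.mem_iUnion, not_exists] at hnot
        have hsmall : ∀ n k : ℕ, k < 2^n →
            |X (((k:ℝ)+1)*T/2^n) ω - X ((k:ℝ)*T/2^n) ω| < a * θ n := by
          intro n k hk
          have h := hnot n ⟨k, hk⟩
          simp only [hBdef, Set.mem_setOf_eq, not_le] at h
          exact h
        have hbound := dyadic_chain hT (hXcont ω) h0
          (θ := fun n => a * θ n) (fun n => by positivity) (hθsum.mul_left a) hsmall
        have hM : M ω ≤ a * Θ := by
          apply ciSup_le
          intro n
          have h := hbound (u n) (hmem n)
          rwa [tsum_mul_left] at h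
        exact absurd hM (not_le.mpr hω)
      · left; exact h0
    refine le_trans (measure_mono hincl) ?_
    refine le_trans (measure_union_le _ _) ?_
    have hzero : P {ω | ¬ (X 0 ω = 0)} = 0 := ae_iff.mp hXinit
    rw [hzero, zero_add]
    refine le_trans (measure_iUnion_le _) ?_
    have hlevel : ∀ n : ℕ, P (⋃ (k : Fin (2^n)), B n (k:ℕ)) ≤
        (2^n : ℝ≥0∞) * ENNReal.ofReal (2 * Real.exp (-(a^2 * ((n:ℝ)+1)))) := by
      intro n
      refine le_trans (measure_iUnion_le _) ?_
      rw [tsum_fintype]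
      calc ∑ k : Fin (2^n), P (B n (k:ℕ))
          ≤ ∑ _k : Fin (2^n), ENNReal.ofReal (2 * Real.exp (-(a^2 * ((n:ℝ)+1)))) :=
            Finset.sum_le_sum (fun k _ => hB n k k.isLt)
        _ = (2^n : ℝ≥0∞) * ENNReal.ofReal (2 * Real.exp (-(a^2 * ((n:ℝ)+1)))) := by
            rw [Finset.sum_const, Finset.card_univ, Fintype.card_fin, nsmul_eq_mul]
            push_cast
            ring
    refine le_trans (ENNReal.tsum_le_tsum hlevel) ?_
    have hterm : ∀ n : ℕ, (2^n : ℝ≥0∞) * ENNReal.ofReal (2 * Real.exp (-(a^2 * ((n:ℝ)+1))))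
        ≤ ENNReal.ofReal ((2 * Real.exp (-a^2)) * (2/Real.exp 1)^n) := by
      intro n
      have h1 : (2^n : ℝ≥0∞) = ENNReal.ofReal ((2:ℝ)^n) := by
        rw [ENNReal.ofReal_pow (by norm_num)]
        norm_num
      rw [h1, ← ENNReal.ofReal_mul (by positivity)]
      apply ENNReal.ofReal_le_ofReal
      have e1 : Real.exp (-(a^2 * ((n:ℝ)+1))) = Real.exp (-a^2) * Real.exp (-(a^2 * n)) := by
        rw [← Real.exp_add]
        ring_nf
      have e2 : Real.exp (-(a^2 * (n:ℝ))) ≤ Real.exp (-(n:ℝ)) := by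
        apply Real.exp_le_exp.2
        have h12 : (1:ℝ) ≤ a^2 := by nlinarith
        nlinarith [Nat.cast_nonneg (α := ℝ) n]
      have e3 : Real.exp (-(n:ℝ)) = ((Real.exp 1)⁻¹)^n := by
        rw [show -(n:ℝ) = (n:ℝ) * (-1) by ring, Real.exp_nat_mul, Real.exp_neg]
      have e4 : ((2:ℝ)/Real.exp 1)^n = 2^n * ((Real.exp 1)⁻¹)^n := by
        rw [div_eq_mul_inv, mul_pow]
      calc (2:ℝ)^n * (2 * Real.exp (-(a^2 * ((n:ℝ)+1))))
          = 2 * Real.exp (-a^2) * (2^n * Real.exp (-(a^2*(n:ℝ)))) := by rw [e1]; ring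
        _ ≤ 2 * Real.exp (-a^2) * (2^n * Real.exp (-(n:ℝ))) := by
            apply mul_le_mul_of_nonneg_left _ (by positivity)
            apply mul_le_mul_of_nonneg_left e2 (by positivity)
        _ = 2 * Real.exp (-a^2) * (2/Real.exp 1)^n := by rw [e3, e4]
    refine le_trans (ENNReal.tsum_le_tsum hterm) ?_
    have hgs : Summable (fun n : ℕ => (2/Real.exp 1)^n) :=
      summable_geometric_of_lt_one hgeom0 hgeomlt
    rw [← ENNReal.ofReal_tsum_of_nonneg (fun n => by positivity) (hgs.mul_left _)]
    apply ENNReal.ofReal_le_ofReal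
    rw [tsum_mul_left, tsum_geometric_of_lt_one hgeom0 hgeomlt]
    apply le_of_eq
    rw [hCdef]
    ring
  -- now integrate the tail
  set γ : ℝ := 1/Θ^2 with hγdef
  have hγpos : 0 < γ := by positivity
  set B₀ : ℝ := max Θ 1 with hB₀def
  have hB₀1 : (1:ℝ) ≤ B₀ := le_max_right _ _
  have hB₀Θ : Θ ≤ B₀ := le_max_left _ _
  set C' : ℝ := C + Real.exp (γ * B₀^2) with hC'def
  have hC'pos : 0 < C' := by positivity
  have hSmeas : ∀ j : ℕ, MeasurableSet {ω | (j:ℝ) - 1 < M ω} := by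
    intro j
    have hset : {ω | (j:ℝ) - 1 < M ω} = ⋃ n, {ω | (j:ℝ) - 1 < |X (u n) ω|} := by
      ext ω
      simp only [Set.mem_setOf_eq, Set.mem_iUnion]
      constructor
      · intro h
        by_contra hnone
        push_neg at hnone
        exact absurd (ciSup_le hnone) (not_le.mpr h)
      · rintro ⟨n, hn⟩
        exact lt_of_lt_of_le hn (le_ciSup (hMbdd ω) n)
    rw [hset]
    exact MeasurableSet.iUnion (fun n => measurableSet_lt measurable_const (hXmeas (u n)).abs)
  have hP : ∀ j : ℕ, P {ω | (j:ℝ) - 1 < M ω} ≤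
      ENNReal.ofReal (C' * Real.exp (-γ * ((j:ℝ)-1)^2)) := by
    intro j
    by_cases hj : B₀ ≤ (j:ℝ) - 1
    · have hΘne : Θ ≠ 0 := hΘpos.ne'
      have ha1 : 1 ≤ ((j:ℝ)-1)/Θ := by
        rw [le_div_iff₀ hΘpos]
        linarith
      have heq : (((j:ℝ)-1)/Θ) * Θ = (j:ℝ)-1 := div_mul_cancel₀ _ hΘne
      have htl := tail _ ha1
      rw [heq] at htl
      refine htl.trans (ENNReal.ofReal_le_ofReal ?_)
      have hsq : -((((j:ℝ)-1)/Θ)^2) = -γ * ((j:ℝ)-1)^2 := by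
        rw [div_pow, hγdef]
        ring
      rw [hsq]
      have : Real.exp (-γ * ((j:ℝ)-1)^2) > 0 := Real.exp_pos _
      have hCC' : C ≤ C' := by
        rw [hC'def]
        nlinarith [Real.exp_pos (γ * B₀^2)]
      nlinarith
    · push_neg at hj
      refine (prob_le_one).trans ?_
      rw [← ENNReal.ofReal_one]
      apply ENNReal.ofReal_le_ofReal
      have hge : -1 ≤ (j:ℝ) - 1 := by
        have : (0:ℝ) ≤ j := Nat.cast_nonneg j
        linarith
      have hb2 : ((j:ℝ)-1)^2 ≤ B₀^2 := by
        rcases le_or_gt 0 ((j:ℝ)-1) with h|h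
        · nlinarith
        · nlinarith
      have hexpC : Real.exp (γ * ((j:ℝ)-1)^2) ≤ C' := by
        have h1 : Real.exp (γ * ((j:ℝ)-1)^2) ≤ Real.exp (γ * B₀^2) :=
          Real.exp_le_exp.2 (mul_le_mul_of_nonneg_left hb2 hγpos.le)
        rw [hC'def]
        linarith
      calc (1:ℝ) = Real.exp (γ * ((j:ℝ)-1)^2) * Real.exp (-(γ * ((j:ℝ)-1)^2)) := by
            rw [← Real.exp_add]
            simp
        _ ≤ C' * Real.exp (-(γ * ((j:ℝ)-1)^2)) :=
            mul_le_mul_of_nonneg_right hexpC (Real.exp_pos _).le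
        _ = C' * Real.exp (-γ * ((j:ℝ)-1)^2) := by ring_nf
  have hsummable : Summable (fun j : ℕ =>
      C' * Real.exp (μ * ((j:ℝ)+1) + (-γ*((j:ℝ)-1)^2))) := by
    apply summable_of_ratio_norm_eventually_le (r := Real.exp (-1))
      (by rw [Real.exp_lt_one_iff]; norm_num)
    rw [Filter.eventually_atTop]
    refine ⟨max 1 ⌈(μ+1)/γ⌉₊, fun j hj => ?_⟩
    have hj1 : 1 ≤ j := le_trans (le_max_left _ _) hj
    have hjγ : (μ+1)/γ ≤ (j:ℝ) := by
      refine le_trans (Nat.le_ceil _) ?_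
      exact_mod_cast le_trans (le_max_right _ _) hj
    have hjγ' : μ + 1 ≤ γ * (j:ℝ) := by
      rw [div_le_iff₀ hγpos] at hjγ
      linarith [hjγ]
    have hj1' : (1:ℝ) ≤ (j:ℝ) := by exact_mod_cast hj1
    have hfpos : ∀ i : ℕ, (0:ℝ) < C' * Real.exp (μ * ((i:ℝ)+1) + (-γ*((i:ℝ)-1)^2)) :=
      fun i => by positivity
    rw [Real.norm_eq_abs, Real.norm_eq_abs, abs_of_pos (hfpos _), abs_of_pos (hfpos j)]
    push_cast
    have hstep : C' * Real.exp (μ * (((j:ℝ)+1)+1) + (-γ*((((j:ℝ)+1))-1)^2))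
        = (C' * Real.exp (μ * ((j:ℝ)+1) + (-γ*((j:ℝ)-1)^2))) *
          Real.exp (μ - γ*(2*(j:ℝ)-1)) := by
      rw [mul_assoc, ← Real.exp_add]
      congr 1
      ring
    rw [hstep, mul_comm (Real.exp (-1))]
    apply mul_le_mul_of_nonneg_left _ (hfpos j).le
    apply Real.exp_le_exp.2
    nlinarith
  -- pointwise domination
  have hpt : ∀ ω, ENNReal.ofReal (Real.exp (μ * M ω)) ≤
      ∑' j : ℕ, ENNReal.ofReal (Real.exp (μ * ((j:ℝ)+1))) *
        Set.indicator {ω | (j:ℝ) - 1 < M ω} 1 ω := by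
    intro ω
    have hk1 : M ω < (⌊M ω⌋₊:ℝ) + 1 := Nat.lt_floor_add_one _
    have hk2 : ((⌊M ω⌋₊:ℕ):ℝ) ≤ M ω := Nat.floor_le (hM0 ω)
    have hmem' : ω ∈ {ω | ((⌊M ω⌋₊:ℕ):ℝ) - 1 < M ω} := by
      simp only [Set.mem_setOf_eq]
      linarith
    have hterm : ENNReal.ofReal (Real.exp (μ * M ω)) ≤
        ENNReal.ofReal (Real.exp (μ * (((⌊M ω⌋₊:ℕ):ℝ)+1))) *
          Set.indicator {ω | ((⌊M ω⌋₊:ℕ):ℝ) - 1 < M ω} 1 ω := by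
      rw [Set.indicator_of_mem hmem', Pi.one_apply, mul_one]
      apply ENNReal.ofReal_le_ofReal
      apply Real.exp_le_exp.2
      nlinarith
    exact hterm.trans (ENNReal.le_tsum ⌊M ω⌋₊)
  show ∫⁻ ω, ENNReal.ofReal (Real.exp (μ * M ω)) ∂P < ⊤
  calc ∫⁻ ω, ENNReal.ofReal (Real.exp (μ * M ω)) ∂P
      ≤ ∫⁻ ω, ∑' j : ℕ, ENNReal.ofReal (Real.exp (μ * ((j:ℝ)+1))) *
          Set.indicator {ω | (j:ℝ) - 1 < M ω} 1 ω ∂P := lintegral_mono hpt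
    _ = ∑' j : ℕ, ∫⁻ ω, ENNReal.ofReal (Real.exp (μ * ((j:ℝ)+1))) *
          Set.indicator {ω | (j:ℝ) - 1 < M ω} 1 ω ∂P :=
        lintegral_tsum (fun j =>
          ((measurable_one.indicator (hSmeas j)).const_mul _).aemeasurable)
    _ = ∑' j : ℕ, ENNReal.ofReal (Real.exp (μ * ((j:ℝ)+1))) * P {ω | (j:ℝ) - 1 < M ω} :=
        tsum_congr (fun j => by
          rw [lintegral_const_mul' _ _ ENNReal.ofReal_ne_top,
            lintegral_indicator_one (hSmeas j)])
    _ ≤ ∑' j : ℕ, ENNReal.ofReal (C' * Real.exp (μ * ((j:ℝ)+1) + (-γ*((j:ℝ)-1)^2))) := by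
        apply ENNReal.tsum_le_tsum
        intro j
        refine le_trans (mul_le_mul_right (hP j) _) (le_of_eq ?_)
        rw [← ENNReal.ofReal_mul (by positivity)]
        congr 1
        rw [Real.exp_add]
        ring
    _ = ENNReal.ofReal (∑' j : ℕ, C' * Real.exp (μ * ((j:ℝ)+1) + (-γ*((j:ℝ)-1)^2))) :=
        (ENNReal.ofReal_tsum_of_nonneg (fun j => by positivity) hsummable).symm
    _ < ⊤ := ENNReal.ofReal_lt_top

lemma gronwall_aux {t c a : ℝ} (hc : 0 < c) (ht : 0 ≤ t) (ha : 0 ≤ a)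
    {f : ℝ → ℝ} (hf : ContinuousOn f (Set.Icc 0 t))
    (hfnonneg : ∀ s ∈ Set.Icc (0:ℝ) t, 0 ≤ f s)
    (hineq : ∀ s ∈ Set.Icc (0:ℝ) t, f s ≤ a + c * ∫ r in (0:ℝ)..s, f r) :
    ∀ s ∈ Set.Icc (0:ℝ) t, f s ≤ a * Real.exp (c * t) := by
  have hIt : IntervalIntegrable f volume 0 t := by
    apply ContinuousOn.intervalIntegrable
    rwa [Set.uIcc_of_le ht]
  have hIs : ∀ s ∈ Set.Icc (0:ℝ) t, IntervalIntegrable f volume 0 s := by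
    intro s hs
    apply ContinuousOn.intervalIntegrable
    rw [Set.uIcc_of_le hs.1]
    exact hf.mono (Set.Icc_subset_Icc le_rfl hs.2)
  have hFcont : ContinuousOn (fun s => ∫ r in (0:ℝ)..s, f r) (Set.Icc 0 t) := by
    have := intervalIntegral.continuousOn_primitive_interval'
      (μ := volume) (b₁ := (0:ℝ)) (b₂ := t) (a := (0:ℝ)) hIt (by rw [Set.uIcc_of_le ht]; exact ⟨le_rfl, ht⟩)
    rwa [Set.uIcc_of_le ht] at this
  set G : ℝ → ℝ := fun s => a + c * ∫ r in (0:ℝ)..s, f r with hGdef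
  have hGcont : ContinuousOn G (Set.Icc 0 t) :=
    continuousOn_const.add (continuousOn_const.mul hFcont)
  have hGd : ∀ s ∈ Set.Ico 0 t, HasDerivWithinAt G (c * f s) (Set.Ici s) s := by
    intro s hs
    have hmemIcc : Set.Icc (0:ℝ) t ∈ nhdsWithin s (Set.Ioi s) := by
      rw [mem_nhdsWithin]
      exact ⟨Set.Iio t, isOpen_Iio, hs.2, by
        rintro x ⟨hx1, hx2⟩
        exact ⟨le_of_lt (lt_of_le_of_lt hs.1 hx2), le_of_lt hx1⟩⟩
    have hmeasAt : StronglyMeasurableAtFilter f (nhdsWithin s (Set.Ioi s)) volume :=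
      ⟨Set.Icc 0 t, hmemIcc, hf.aestronglyMeasurable measurableSet_Icc⟩
    have hcontAt : ContinuousWithinAt f (Set.Ioi s) s :=
      (hf s (Set.Ico_subset_Icc_self hs)).mono_of_mem_nhdsWithin hmemIcc
    have hFd : HasDerivWithinAt (fun s' => ∫ r in (0:ℝ)..s', f r) (f s) (Set.Ici s) s :=
      intervalIntegral.integral_hasDerivWithinAt_right
        (hIs s (Set.Ico_subset_Icc_self hs)) hmeasAt hcontAt
    exact (hFd.const_mul c).const_add a
  have hG0 : ‖G 0‖ ≤ a := by
    have hG00 : G 0 = a := by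
      simp [hGdef, intervalIntegral.integral_same]
    rw [hG00, Real.norm_eq_abs, abs_of_nonneg ha]
  have hbound : ∀ s ∈ Set.Ico 0 t, ‖c * f s‖ ≤ c * ‖G s‖ + 0 := by
    intro s hs
    have hs' := Set.Ico_subset_Icc_self hs
    have hf0 := hfnonneg s hs'
    have hF0 : 0 ≤ ∫ r in (0:ℝ)..s, f r :=
      intervalIntegral.integral_nonneg hs'.1
        (fun r hr => hfnonneg r ⟨hr.1, le_trans hr.2 hs'.2⟩)
    have hG0' : 0 ≤ G s := by
      simp only [hGdef]
      positivity
    rw [Real.norm_eq_abs, Real.norm_eq_abs, abs_of_nonneg (by positivity),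
      abs_of_nonneg hG0', add_zero]
    have h5 := hineq s hs'
    have hGs : G s = a + c * ∫ r in (0:ℝ)..s, f r := rfl
    nlinarith
  have hmain := norm_le_gronwallBound_of_norm_deriv_right_le hGcont hGd hG0 hbound
  intro s hs
  have h1 := hmain s hs
  rw [gronwallBound_ε0, sub_zero, Real.norm_eq_abs] at h1
  have h2 : f s ≤ G s := hineq s hs
  have h3 : G s ≤ |G s| := le_abs_self _
  have h4 : a * Real.exp (c * s) ≤ a * Real.exp (c * t) := by
    apply mul_le_mul_of_nonneg_left _ ha
    exact Real.exp_le_exp.2 (mul_le_mul_of_nonneg_left hs.2 hc.le)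
  linarith

lemma measurable_abs_csup {Ω : Type} [MeasurableSpace Ω] {T : ℝ} {g : ℝ → Ω → ℝ}
    (hgm : ∀ t, Measurable (g t)) (hgc : ∀ ω, Continuous fun t => g t ω)
    {u : ℕ → ℝ} (hmem : ∀ n, u n ∈ Set.Icc 0 T) :
    Measurable (fun ω => ⨆ n, |g (u n) ω|) := by
  apply measurable_of_Ioi
  intro b
  have hset : (fun ω => ⨆ n, |g (u n) ω|) ⁻¹' (Set.Ioi b) = ⋃ n, {ω | b < |g (u n) ω|} := by
    ext ω
    simp only [Set.mem_preimage, Set.mem_Ioi, Set.mem_iUnion, Set.mem_setOf_eq]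
    constructor
    · intro h
      by_contra hnone
      push_neg at hnone
      exact absurd (ciSup_le hnone) (not_le.mpr h)
    · rintro ⟨n, hn⟩
      exact lt_of_lt_of_le hn (le_ciSup (bddAbove_range_of_cont (hgc ω).abs hmem) n)
  rw [hset]
  exact MeasurableSet.iUnion (fun n => measurableSet_lt measurable_const (hgm (u n)).abs)

lemma euclid_norm_le_sum {d : ℕ} (v : EuclideanSpace ℝ (Fin d)) : ‖v‖ ≤ ∑ i, |v i| := by
  rw [EuclideanSpace.norm_eq]
  have h1 : ∑ i, ‖v i‖^2 ≤ (∑ i, |v i|)^2 := by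
    simp_rw [Real.norm_eq_abs]
    exact Finset.sum_sq_le_sq_sum_of_nonneg (fun i _ => abs_nonneg _)
  calc Real.sqrt (∑ i, ‖v i‖^2) ≤ Real.sqrt ((∑ i, |v i|)^2) := Real.sqrt_le_sqrt h1
    _ = ∑ i, |v i| := Real.sqrt_sq (Finset.sum_nonneg fun i _ => abs_nonneg _)


/-- A standard `d`-dimensional Brownian motion on `[0,∞)` (indexed by `ℝ`): it starts at `0`
almost surely, has continuous sample paths, measurable marginals, independent increments,
and each increment `W_t − W_s` (for `0 ≤ s ≤ t`) is a centered Gaussian vector with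
covariance `(t−s)·Id`, i.e. its coordinates are independent real Gaussians of
variance `t − s`. -/
structure IsStdBrownianMotion {Ω : Type} [MeasurableSpace Ω] (P : MeasureTheory.Measure Ω)
    {d : ℕ} (W : ℝ → Ω → EuclideanSpace ℝ (Fin d)) : Prop where
  meas : ∀ t : ℝ, Measurable (W t)
  init : ∀ᵐ ω ∂P, W 0 ω = 0
  cont : ∀ ω, Continuous fun t => W t ω
  indep_incr : ∀ (n : ℕ) (t : Fin (n + 1) → ℝ), Monotone t →
    ProbabilityTheory.iIndepFun
      (fun (k : Fin n) ω => W (t k.succ) ω - W (t k.castSucc) ω) P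
  gauss_coord : ∀ s t : ℝ, 0 ≤ s → s ≤ t → ∀ i : Fin d,
    MeasureTheory.Measure.map (fun ω => W t ω i - W s ω i) P
      = ProbabilityTheory.gaussianReal 0 (Real.toNNReal (t - s))
  indep_coord : ∀ s t : ℝ, 0 ≤ s → s ≤ t →
    ProbabilityTheory.iIndepFun
      (fun i ω => W t ω i - W s ω i) P

set_option maxHeartbeats 1000000 in
/-- Exponential integrability, locally uniformly in the initial condition,
of the running supremum of the solution of a random ODE with additive noise
`R^{t,x}_s = x + ∫_0^s b(t−r, R^{t,x}_r) dr + σ U_s` with `b` of at most linear growth: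
for every `p > 0`,
`E[exp(p · sup_{t∈[0,T]} sup_{s∈[0,t]} sup_{x∈[−p,p]^d} ‖R^{t,x}_s‖)] < ∞`. -/
theorem stmt_5 {Ω : Type} [MeasurableSpace Ω] (P : Measure Ω) [IsProbabilityMeasure P]
    (T c : ℝ) (hT : 0 < T) (hc : 0 < c) (d : ℕ) (hd : 0 < d)
    (σ : Matrix (Fin d) (Fin d) ℝ)
    (b : ℝ → EuclideanSpace ℝ (Fin d) → EuclideanSpace ℝ (Fin d))
    (hb_meas : Measurable (fun q : ℝ × EuclideanSpace ℝ (Fin d) => b q.1 q.2))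
    (hb_growth : ∀ t ∈ Set.Icc (0:ℝ) T, ∀ x : EuclideanSpace ℝ (Fin d),
      ‖b t x‖ ≤ c * (1 + ‖x‖))
    (U : ℝ → Ω → EuclideanSpace ℝ (Fin d))
    (hU : IsStdBrownianMotion P U)
    (R : ℝ → EuclideanSpace ℝ (Fin d) → ℝ → Ω → EuclideanSpace ℝ (Fin d))
    (hRcont : ∀ (ω : Ω), ∀ t ∈ Set.Icc (0:ℝ) T, ∀ x : EuclideanSpace ℝ (Fin d),
      ContinuousOn (fun s => R t x s ω) (Set.Icc 0 t))
    (hR : ∀ (ω : Ω), ∀ t ∈ Set.Icc (0:ℝ) T, ∀ x : EuclideanSpace ℝ (Fin d),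
      ∀ s ∈ Set.Icc (0:ℝ) t,
      R t x s ω = x + (∫ r in (0:ℝ)..s, b (t - r) (R t x r ω)) +
        Matrix.toEuclideanLin σ (U s ω)) :
    ∀ p : ℝ, 0 < p →
      (∫⁻ ω, ENNReal.ofReal (Real.exp (p *
          ⨆ (t : Set.Icc (0:ℝ) T) (s : Set.Icc (0:ℝ) (t:ℝ))
            (x : {x : EuclideanSpace ℝ (Fin d) // ∀ i, |x i| ≤ p}),
            ‖R (t:ℝ) x.1 (s:ℝ) ω‖)) ∂P) < ⊤ := by
  intro p hp
  haveI hFinNe : Nonempty (Fin d) := ⟨⟨0, hd⟩⟩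
  obtain ⟨u, hmem, hdense⟩ := exists_dense_seq_Icc hT
  set K : ℝ := ‖LinearMap.toContinuousLinearMap (Matrix.toEuclideanLin σ)‖ with hKdef
  have hK0 : 0 ≤ K := norm_nonneg _
  have hK : ∀ v : EuclideanSpace ℝ (Fin d), ‖Matrix.toEuclideanLin σ v‖ ≤ K * ‖v‖ := by
    intro v
    have h := (LinearMap.toContinuousLinearMap (Matrix.toEuclideanLin σ)).le_opNorm v
    simpa using h
  set N : Ω → ℝ := fun ω => ⨆ n, ‖U (u n) ω‖ with hNdef
  have hNle : ∀ ω, ∀ s ∈ Set.Icc (0:ℝ) T, ‖U s ω‖ ≤ N ω := fun ω =>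
    le_iSup_of_dense_cont (hU.cont ω).norm hmem hdense
  have hNbdd : ∀ ω, BddAbove (Set.range fun n => ‖U (u n) ω‖) := fun ω =>
    bddAbove_range_of_cont (hU.cont ω).norm hmem
  have hN0 : ∀ ω, 0 ≤ N ω := fun ω => le_trans (norm_nonneg _) (le_ciSup (hNbdd ω) 0)
  set Cx : ℝ := Real.sqrt (d * p^2) with hCx
  have hCx0 : 0 ≤ Cx := Real.sqrt_nonneg _
  have hxbound : ∀ x : EuclideanSpace ℝ (Fin d), (∀ i, |x i| ≤ p) → ‖x‖ ≤ Cx := by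
    intro x hx
    rw [EuclideanSpace.norm_eq, hCx]
    apply Real.sqrt_le_sqrt
    calc ∑ i, ‖x i‖^2 ≤ ∑ _i : Fin d, p^2 := Finset.sum_le_sum (fun i _ => by
          rw [Real.norm_eq_abs]
          nlinarith [abs_nonneg (x i), hx i])
      _ = d * p^2 := by
          rw [Finset.sum_const, Finset.card_univ, Fintype.card_fin, nsmul_eq_mul]
  have ha0' : 0 ≤ Cx + c*T := by positivity
  -- Gronwall bound, pathwise
  have hRbound : ∀ ω, ∀ t ∈ Set.Icc (0:ℝ) T, ∀ x : EuclideanSpace ℝ (Fin d),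
      (∀ i, |x i| ≤ p) → ∀ s ∈ Set.Icc (0:ℝ) t,
      ‖R t x s ω‖ ≤ (Cx + c*T + K * N ω) * Real.exp (c*T) := by
    intro ω t ht x hxp s hs
    have ht0 : 0 ≤ t := ht.1
    have htT : t ≤ T := ht.2
    set f : ℝ → ℝ := fun r => ‖R t x r ω‖ with hfdef
    have hfcont : ContinuousOn f (Set.Icc 0 t) := (hRcont ω t ht x).norm
    have hfnonneg : ∀ r ∈ Set.Icc (0:ℝ) t, 0 ≤ f r := fun r _ => norm_nonneg _
    have ha0 : 0 ≤ Cx + c*T + K * N ω :=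
      add_nonneg ha0' (mul_nonneg hK0 (hN0 ω))
    have hineq : ∀ s' ∈ Set.Icc (0:ℝ) t,
        f s' ≤ (Cx + c*T + K * N ω) + c * ∫ r in (0:ℝ)..s', f r := by
      intro s' hs'
      have hs'0 : 0 ≤ s' := hs'.1
      have hs't : s' ≤ t := hs'.2
      have hsub : Set.Ioc (0:ℝ) s' ⊆ Set.Icc (0:ℝ) t :=
        fun r hr => ⟨hr.1.le, le_trans hr.2 hs't⟩
      have hpair : ContinuousOn (fun r => ((t - r : ℝ), R t x r ω)) (Set.Icc 0 t) :=
        ((continuous_const.sub continuous_id).continuousOn).prodMk (hRcont ω t ht x)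
      have haem : AEMeasurable (fun r => b (t - r) (R t x r ω))
          (volume.restrict (Set.Ioc 0 s')) := by
        have h1 : AEMeasurable (fun r => ((t - r : ℝ), R t x r ω))
            (volume.restrict (Set.Ioc 0 s')) :=
          (hpair.mono hsub).aemeasurable measurableSet_Ioc
        exact hb_meas.comp_aemeasurable h1
      have hbmem : ∀ r ∈ Set.Icc (0:ℝ) t, t - r ∈ Set.Icc (0:ℝ) T :=
        fun r hr => ⟨by linarith [hr.2], by linarith [hr.1]⟩
      have hgcont : ContinuousOn (fun r => c + c * f r) (Set.Icc 0 t) :=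
        continuousOn_const.add (continuousOn_const.mul hfcont)
      have hgint : IntervalIntegrable (fun r => c + c * f r) volume 0 s' := by
        apply ContinuousOn.intervalIntegrable
        rw [Set.uIcc_of_le hs'0]
        exact hgcont.mono (Set.Icc_subset_Icc le_rfl hs't)
      have hfint : IntervalIntegrable f volume 0 s' := by
        apply ContinuousOn.intervalIntegrable
        rw [Set.uIcc_of_le hs'0]
        exact hfcont.mono (Set.Icc_subset_Icc le_rfl hs't)
      have hbint : IntervalIntegrable (fun r => b (t - r) (R t x r ω)) volume 0 s' := by
        rw [intervalIntegrable_iff, Set.uIoc_of_le hs'0]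
        apply Integrable.mono' (g := fun r => c + c * f r)
        · have h2 : IntegrableOn (fun r => c + c * f r) (Set.Icc 0 s') volume :=
            (hgcont.mono (Set.Icc_subset_Icc le_rfl hs't)).integrableOn_Icc
          exact h2.mono_set Set.Ioc_subset_Icc_self
        · exact haem.aestronglyMeasurable
        · apply (ae_restrict_iff' measurableSet_Ioc).2
          apply ae_of_all
          intro r hr
          have hr' := hsub hr
          calc ‖b (t - r) (R t x r ω)‖ ≤ c * (1 + ‖R t x r ω‖) :=
                hb_growth _ (hbmem r hr') _
            _ = c + c * f r := by rw [hfdef]; ring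
      have hnormint : IntervalIntegrable (fun r => ‖b (t - r) (R t x r ω)‖) volume 0 s' :=
        hbint.norm
      have heq := hR ω t ht x s' hs'
      have hstep1 : f s' ≤ ‖x‖ + ‖∫ r in (0:ℝ)..s', b (t - r) (R t x r ω)‖ +
          ‖Matrix.toEuclideanLin σ (U s' ω)‖ := by
        show ‖R t x s' ω‖ ≤ _
        rw [heq]
        exact norm_add₃_le
      have hstep2 : ‖∫ r in (0:ℝ)..s', b (t - r) (R t x r ω)‖ ≤
          ∫ r in (0:ℝ)..s', ‖b (t - r) (R t x r ω)‖ :=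
        intervalIntegral.norm_integral_le_integral_norm hs'0
      have hstep3 : (∫ r in (0:ℝ)..s', ‖b (t - r) (R t x r ω)‖) ≤
          ∫ r in (0:ℝ)..s', (c + c * f r) := by
        apply intervalIntegral.integral_mono_on hs'0 hnormint hgint
        intro r hr
        have hr' : r ∈ Set.Icc (0:ℝ) t := ⟨hr.1, le_trans hr.2 hs't⟩
        calc ‖b (t - r) (R t x r ω)‖ ≤ c * (1 + ‖R t x r ω‖) :=
              hb_growth _ (hbmem r hr') _
          _ = c + c * f r := by rw [hfdef]; ring
      have hstep4 : (∫ r in (0:ℝ)..s', (c + c * f r)) =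
          c * s' + c * ∫ r in (0:ℝ)..s', f r := by
        rw [intervalIntegral.integral_add intervalIntegrable_const (hfint.const_mul c),
          intervalIntegral.integral_const, intervalIntegral.integral_const_mul]
        simp [smul_eq_mul]
        ring
      have hstep5 : ‖Matrix.toEuclideanLin σ (U s' ω)‖ ≤ K * N ω := by
        refine (hK _).trans ?_
        exact mul_le_mul_of_nonneg_left (hNle ω s' ⟨hs'0, le_trans hs't htT⟩) hK0
      have hx' : ‖x‖ ≤ Cx := hxbound x hxp
      have hcs : c * s' ≤ c * T := mul_le_mul_of_nonneg_left (le_trans hs't htT) hc.le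
      linarith
    have hgr := gronwall_aux hc ht0 ha0 hfcont hfnonneg hineq s hs
    refine hgr.trans ?_
    apply mul_le_mul_of_nonneg_left _ ha0
    exact Real.exp_le_exp.2 (mul_le_mul_of_nonneg_left htT hc.le)
  haveI h1ne : Nonempty (Set.Icc (0:ℝ) T) := ⟨⟨0, le_rfl, hT.le⟩⟩
  haveI h3ne : Nonempty {x : EuclideanSpace ℝ (Fin d) // ∀ i, |x i| ≤ p} :=
    ⟨⟨0, fun i => by simp [hp.le]⟩⟩
  have hSbound : ∀ ω, (⨆ (t : Set.Icc (0:ℝ) T) (s : Set.Icc (0:ℝ) (t:ℝ))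
      (x : {x : EuclideanSpace ℝ (Fin d) // ∀ i, |x i| ≤ p}), ‖R (t:ℝ) x.1 (s:ℝ) ω‖)
      ≤ (Cx + c*T + K * N ω) * Real.exp (c*T) := by
    intro ω
    apply ciSup_le
    intro t
    haveI : Nonempty (Set.Icc (0:ℝ) (t:ℝ)) := ⟨⟨0, le_rfl, t.2.1⟩⟩
    apply ciSup_le
    intro s
    apply ciSup_le
    intro x
    exact hRbound ω t t.2 x.1 x.2 s s.2
  set Mi : Fin d → Ω → ℝ := fun i ω => ⨆ n, |U (u n) ω i| with hMi
  have hUicont : ∀ (i : Fin d) (ω : Ω), Continuous fun s => U s ω i := fun i ω =>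
    (continuous_apply i).comp ((PiLp.continuous_ofLp ..).comp (hU.cont ω))
  have hUimeas : ∀ (i : Fin d) (t : ℝ), Measurable fun ω => U t ω i := fun i t =>
    (measurable_pi_apply i).comp ((WithLp.measurable_ofLp ..).comp (hU.meas t))
  have hMibdd : ∀ i ω, BddAbove (Set.range fun n => |U (u n) ω i|) := fun i ω =>
    bddAbove_range_of_cont (hUicont i ω).abs hmem
  have hMi0 : ∀ i ω, 0 ≤ Mi i ω := fun i ω =>
    le_trans (abs_nonneg _) (le_ciSup (hMibdd i ω) 0)
  have hNsum : ∀ ω, N ω ≤ ∑ i, Mi i ω := by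
    intro ω
    apply ciSup_le
    intro n
    refine (euclid_norm_le_sum (U (u n) ω)).trans ?_
    exact Finset.sum_le_sum (fun i _ => le_ciSup (hMibdd i ω) n)
  set lam : ℝ := p * K * Real.exp (c*T) + 1 with hlam
  have hlam0 : 0 < lam := by positivity
  set μ' : ℝ := d * lam with hμ'
  have hμ'0 : 0 < μ' := by
    apply mul_pos _ hlam0
    exact_mod_cast hd
  set c₀ : ℝ := p * ((Cx + c*T) * Real.exp (c*T)) with hc₀
  have hpt : ∀ ω, ENNReal.ofReal (Real.exp (p *
      ⨆ (t : Set.Icc (0:ℝ) T) (s : Set.Icc (0:ℝ) (t:ℝ))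
        (x : {x : EuclideanSpace ℝ (Fin d) // ∀ i, |x i| ≤ p}),
        ‖R (t:ℝ) x.1 (s:ℝ) ω‖)) ≤
      ENNReal.ofReal (Real.exp c₀) * ∑ i, ENNReal.ofReal (Real.exp (μ' * Mi i ω)) := by
    intro ω
    obtain ⟨i₀, _, hmax⟩ := Finset.exists_max_image Finset.univ (fun i => Mi i ω)
      ⟨⟨0, hd⟩, Finset.mem_univ _⟩
    have hsum_le : ∑ i, Mi i ω ≤ (d:ℝ) * Mi i₀ ω := by
      calc ∑ i, Mi i ω ≤ ∑ _i : Fin d, Mi i₀ ω :=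
            Finset.sum_le_sum (fun i _ => hmax i (Finset.mem_univ i))
        _ = (d:ℝ) * Mi i₀ ω := by
            rw [Finset.sum_const, Finset.card_univ, Fintype.card_fin, nsmul_eq_mul]
    have hexp1 : p * (⨆ (t : Set.Icc (0:ℝ) T) (s : Set.Icc (0:ℝ) (t:ℝ))
        (x : {x : EuclideanSpace ℝ (Fin d) // ∀ i, |x i| ≤ p}),
        ‖R (t:ℝ) x.1 (s:ℝ) ω‖) ≤ c₀ + μ' * Mi i₀ ω := by
      have h2 := mul_le_mul_of_nonneg_left (hSbound ω) hp.le
      have h3 := hNsum ω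
      have h4 : 0 ≤ ∑ i, Mi i ω := Finset.sum_nonneg (fun i _ => hMi0 i ω)
      have e0 : p * ((Cx + c*T + K * N ω) * Real.exp (c*T)) =
          c₀ + (p*K*Real.exp (c*T)) * N ω := by rw [hc₀]; ring
      have e1 : (p*K*Real.exp (c*T)) * N ω ≤ (p*K*Real.exp (c*T)) * ∑ i, Mi i ω :=
        mul_le_mul_of_nonneg_left h3 (by positivity)
      have e2 : (p*K*Real.exp (c*T)) * ∑ i, Mi i ω ≤ lam * ∑ i, Mi i ω :=
        mul_le_mul_of_nonneg_right (by rw [hlam]; linarith) h4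
      have e3 : lam * ∑ i, Mi i ω ≤ lam * ((d:ℝ) * Mi i₀ ω) :=
        mul_le_mul_of_nonneg_left hsum_le hlam0.le
      have e4 : lam * ((d:ℝ) * Mi i₀ ω) = μ' * Mi i₀ ω := by rw [hμ']; ring
      linarith
    calc ENNReal.ofReal (Real.exp (p *
        ⨆ (t : Set.Icc (0:ℝ) T) (s : Set.Icc (0:ℝ) (t:ℝ))
          (x : {x : EuclideanSpace ℝ (Fin d) // ∀ i, |x i| ≤ p}),
          ‖R (t:ℝ) x.1 (s:ℝ) ω‖))
        ≤ ENNReal.ofReal (Real.exp (c₀ + μ' * Mi i₀ ω)) :=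
          ENNReal.ofReal_le_ofReal (Real.exp_le_exp.2 hexp1)
      _ = ENNReal.ofReal (Real.exp c₀ * Real.exp (μ' * Mi i₀ ω)) := by rw [Real.exp_add]
      _ = ENNReal.ofReal (Real.exp c₀) * ENNReal.ofReal (Real.exp (μ' * Mi i₀ ω)) :=
          ENNReal.ofReal_mul (Real.exp_pos _).le
      _ ≤ ENNReal.ofReal (Real.exp c₀) * ∑ i, ENNReal.ofReal (Real.exp (μ' * Mi i ω)) := by
          apply mul_le_mul_right
          exact Finset.single_le_sum
            (f := fun i => ENNReal.ofReal (Real.exp (μ' * Mi i ω)))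
            (fun i _ => zero_le) (Finset.mem_univ i₀)
  have hMimeas : ∀ i : Fin d, Measurable fun ω =>
      ENNReal.ofReal (Real.exp (μ' * Mi i ω)) := by
    intro i
    exact ENNReal.measurable_ofReal.comp (Real.measurable_exp.comp
      ((measurable_abs_csup (hUimeas i) (hUicont i) hmem).const_mul μ'))
  calc ∫⁻ ω, ENNReal.ofReal (Real.exp (p *
        ⨆ (t : Set.Icc (0:ℝ) T) (s : Set.Icc (0:ℝ) (t:ℝ))
          (x : {x : EuclideanSpace ℝ (Fin d) // ∀ i, |x i| ≤ p}),
          ‖R (t:ℝ) x.1 (s:ℝ) ω‖)) ∂P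
      ≤ ∫⁻ ω, ENNReal.ofReal (Real.exp c₀) *
          ∑ i, ENNReal.ofReal (Real.exp (μ' * Mi i ω)) ∂P := lintegral_mono hpt
    _ = ENNReal.ofReal (Real.exp c₀) *
        ∫⁻ ω, ∑ i, ENNReal.ofReal (Real.exp (μ' * Mi i ω)) ∂P :=
        lintegral_const_mul' _ _ ENNReal.ofReal_ne_top
    _ = ENNReal.ofReal (Real.exp c₀) *
        ∑ i, ∫⁻ ω, ENNReal.ofReal (Real.exp (μ' * Mi i ω)) ∂P := by
        rw [lintegral_finset_sum' _ (fun i _ => (hMimeas i).aemeasurable)]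
    _ < ⊤ := by
        apply ENNReal.mul_lt_top ENNReal.ofReal_lt_top
        apply ENNReal.sum_lt_top.2
        intro i _
        exact coord_exp_integrable P hT (fun t ω => U t ω i) (hUimeas i)
          (fun ω => hUicont i ω)
          (hU.init.mono (fun ω h => by show U 0 ω _ = 0; rw [h]; rfl))
          (fun s t hs hst => hU.gauss_coord s t hs hst i) hmem hμ'0
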